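/- Fix d ≥ 1 and ε > 0, and consider pairs of tuples of nonzero-denominator rationals (a_0, ..., a_{d-2}; b_0, ..., b_{d-1}), all of Weil height ≤ log X, chosen uniformly at random. Call the pair ε-ordinary if rad(denom(c)) ≥ X^{1−2ε} for every coefficient c, and gcd(denom(c), denom(c')) ≤ X^{2ε} for every pair of distinct coefficients c, c'. Then the proportion of pairs that are ε-ordinary is 1 − O_ε(d²X^{−ε}). -/

import Mathlib

/-- The radical of a positive integer: the product of its distinct prime divisors. -/
def rad (n : ℕ) : ℕ := ∏ p ∈ n.primeFactors, p

/-!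
Write `M = ⌊X⌋` and let `N ≍ X²` be the number of rationals of height at most `X` (the lower bound
comes from counting coprime pairs: at most `∑_{g ≥ 2} (M/g)² ≤ (11/12) M²` pairs share a factor).
A rational is fixed by its numerator and denominator, so it suffices to count denominators, at a
loss of a factor `2M + 1` per coordinate.

* Every `n` is `a b²` with `a` squarefree, and then `a ∣ rad n`. So `n ≤ X` with `rad n < y` gives
  a pair with `a < y` and `a b² ≤ X`; splitting at `b = B` there are at most `yB + 2X/B` of them.
  With `y = X^{1-2ε}` and `B = X^ε` this is `O(X^{1-ε})`.
* Pairs of denominators with `gcd > Z` number at most `∑_{g > Z} (X/g)² ≤ 2X²/Z`.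

Hence one coordinate fails the radical condition with probability `O(X^{-ε})`, and one pair of
coordinates fails the gcd condition with probability `O(X^{-2ε})`. The coordinates are independent
and uniform, so a union bound over the `2d - 1` coordinates and their pairs gives `O(d² X^{-ε})`.
-/

open Finset

lemma rad_pos (n : ℕ) : 0 < rad n :=
  prod_pos fun _ hp => (Nat.prime_of_mem_primeFactors hp).pos

lemma dvd_rad_of_squarefree {s n : ℕ} (hs : Squarefree s) (h : s ∣ n) (hn : n ≠ 0) :
    s ∣ rad n :=
  Nat.prod_primeFactors_of_squarefree hs ▸
    prod_dvd_prod_of_subset _ _ _ (Nat.primeFactors_mono h hn)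

lemma card_filter_Ioc_le {M : ℕ} {t : ℝ} (ht : 0 ≤ t) {p : ℕ → Prop} [DecidablePred p]
    (hp : ∀ n, p n → (n : ℝ) ≤ t) : (#{n ∈ Ioc 0 M | p n} : ℝ) ≤ t := by
  have hsub : {n ∈ Ioc 0 M | p n} ⊆ Ioc 0 ⌊t⌋₊ := fun n hn => by
    simp only [mem_filter, mem_Ioc] at hn
    exact mem_Ioc.2 ⟨hn.1.1, Nat.le_floor (hp n hn.2)⟩
  calc (#{n ∈ Ioc 0 M | p n} : ℝ) ≤ #(Ioc 0 ⌊t⌋₊) := by exact_mod_cast card_le_card hsub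
    _ ≤ t := by simpa using Nat.floor_le ht

lemma sum_Ioc_inv_sq_le (k M : ℕ) : ∑ g ∈ Ioc k M, ((g : ℝ) ^ 2)⁻¹ ≤ 2 / (k + 1) :=
  (sum_le_sum_of_subset_of_nonneg (fun g hg => by simp only [mem_Ioc, mem_Ioo] at hg ⊢; omega)
    (fun _ _ _ => by positivity)).trans (sum_Ioo_inv_sq_le k (M + 1))

lemma card_filter_rad_lt_le_sum (M : ℕ) (y : ℝ) :
    #{n ∈ Ioc 0 M | (rad n : ℝ) < y} ≤
      ∑ b ∈ Ioc 0 M, #{a ∈ Ioc 0 M | ((a : ℕ) : ℝ) < y ∧ a * b ^ 2 ≤ M} := by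
  calc _ ≤ #((Ioc 0 M).biUnion fun b =>
        {a ∈ Ioc 0 M | ((a : ℕ) : ℝ) < y ∧ a * b ^ 2 ≤ M}.image (· * b ^ 2)) := by
        refine card_le_card fun n hn => ?_
        simp only [mem_filter, mem_Ioc] at hn
        obtain ⟨a, b, ha, hb, rfl, hsq⟩ := Nat.sq_mul_squarefree_of_pos hn.1.1
        have ha_rad : a ≤ rad (b ^ 2 * a) :=
          Nat.le_of_dvd (rad_pos _) (dvd_rad_of_squarefree hsq (dvd_mul_left a _) (by positivity))
        have hab : a * b ^ 2 ≤ M := by linarith [hn.1.2]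
        have ha_le : a ≤ a * b ^ 2 := Nat.le_mul_of_pos_right a (by positivity)
        have hb_le : b ≤ a * b ^ 2 := by nlinarith
        simp only [mem_biUnion, mem_image, mem_filter, mem_Ioc]
        refine ⟨b, ⟨hb, hb_le.trans hab⟩, a, ⟨⟨ha, ha_le.trans hab⟩, ?_, hab⟩, by ring⟩
        exact lt_of_le_of_lt (by exact_mod_cast ha_rad) hn.2
    _ ≤ _ := card_biUnion_le.trans (sum_le_sum fun _ _ => card_image_le)

lemma card_filter_rad_lt_le (M : ℕ) {y B : ℝ} (hy : 0 < y) (hB : 0 < B) :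
    (#{n ∈ Ioc 0 M | (rad n : ℝ) < y} : ℝ) ≤ y * B + 2 * M / B := by
  set K := ⌊B⌋₊
  have hfiber : ∀ b ∈ Ioc 0 M, (#{a ∈ Ioc 0 M | ((a : ℕ) : ℝ) < y ∧ a * b ^ 2 ≤ M} : ℝ) ≤
      if b ≤ K then y else M * ((b : ℝ) ^ 2)⁻¹ := by
    intro b hb
    have hb0 : (0 : ℝ) < b := by simp only [mem_Ioc] at hb; exact_mod_cast hb.1
    split_ifs
    · exact card_filter_Ioc_le hy.le fun a ha => ha.1.le
    · refine card_filter_Ioc_le (by positivity) fun a ha => ?_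
      rw [← div_eq_mul_inv, le_div_iff₀ (by positivity)]
      exact_mod_cast ha.2
  have hsmall : (#{b ∈ Ioc 0 M | b ≤ K} : ℝ) ≤ B :=
    card_filter_Ioc_le hB.le fun b hb => (Nat.le_floor_iff hB.le).1 hb
  have hlarge : ∑ b ∈ Ioc 0 M with ¬b ≤ K, ((b : ℝ) ^ 2)⁻¹ ≤ 2 / B := by
    refine le_trans (sum_le_sum_of_subset_of_nonneg (fun b hb => ?_) fun _ _ _ => by positivity)
      ((sum_Ioc_inv_sq_le K M).trans ?_)
    · simp only [mem_filter, mem_Ioc] at hb ⊢; omega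
    · exact div_le_div_of_nonneg_left (by norm_num) hB (Nat.lt_floor_add_one B).le
  calc (#{n ∈ Ioc 0 M | (rad n : ℝ) < y} : ℝ)
      ≤ ∑ b ∈ Ioc 0 M, (#{a ∈ Ioc 0 M | ((a : ℕ) : ℝ) < y ∧ a * b ^ 2 ≤ M} : ℝ) := by
        exact_mod_cast card_filter_rad_lt_le_sum M y
    _ ≤ ∑ b ∈ Ioc 0 M, if b ≤ K then y else M * ((b : ℝ) ^ 2)⁻¹ := sum_le_sum hfiber
    _ = #{b ∈ Ioc 0 M | b ≤ K} * y + M * ∑ b ∈ Ioc 0 M with ¬b ≤ K, ((b : ℝ) ^ 2)⁻¹ := by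
        rw [sum_ite, sum_const, nsmul_eq_mul, mul_sum]
    _ ≤ B * y + M * (2 / B) := by gcongr
    _ = y * B + 2 * M / B := by ring

lemma card_filter_lt_gcd_le_sum (M k : ℕ) :
    (#{w ∈ Ioc 0 M ×ˢ Ioc 0 M | k < Nat.gcd w.1 w.2} : ℝ) ≤
      M ^ 2 * ∑ g ∈ Ioc k M, ((g : ℝ) ^ 2)⁻¹ := by
  have hsub : {w ∈ Ioc 0 M ×ˢ Ioc 0 M | k < Nat.gcd w.1 w.2} ⊆
      (Ioc k M).biUnion fun g => {a ∈ Ioc 0 M | g ∣ a} ×ˢ {a ∈ Ioc 0 M | g ∣ a} := by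
    intro w hw
    simp only [mem_filter, mem_product, mem_Ioc] at hw
    simp only [mem_biUnion, mem_product, mem_filter, mem_Ioc]
    exact ⟨_, ⟨hw.2, (Nat.le_of_dvd hw.1.1.1 (Nat.gcd_dvd_left _ _)).trans hw.1.1.2⟩,
      ⟨hw.1.1, Nat.gcd_dvd_left _ _⟩, ⟨hw.1.2, Nat.gcd_dvd_right _ _⟩⟩
  calc (#{w ∈ Ioc 0 M ×ˢ Ioc 0 M | k < Nat.gcd w.1 w.2} : ℝ)
      ≤ ∑ g ∈ Ioc k M, ((M / g : ℕ) : ℝ) ^ 2 := by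
        refine mod_cast (card_le_card hsub).trans (card_biUnion_le.trans_eq ?_)
        simp only [card_product, Nat.Ioc_filter_dvd_card_eq_div, sq]
    _ ≤ ∑ g ∈ Ioc k M, ((M : ℝ) / g) ^ 2 := by gcongr; exact Nat.cast_div_le
    _ = M ^ 2 * ∑ g ∈ Ioc k M, ((g : ℝ) ^ 2)⁻¹ := by
        rw [mul_sum]; exact sum_congr rfl fun _ _ => by ring

lemma card_filter_lt_gcd_le (M : ℕ) {Z : ℝ} (hZ : 0 < Z) :
    (#{w ∈ Ioc 0 M ×ˢ Ioc 0 M | Z < Nat.gcd w.1 w.2} : ℝ) ≤ 2 * M ^ 2 / Z := by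
  simp_rw [← Nat.floor_lt hZ.le]
  calc _ ≤ (M : ℝ) ^ 2 * (2 / (⌊Z⌋₊ + 1)) :=
        (card_filter_lt_gcd_le_sum M _).trans (by gcongr; exact sum_Ioc_inv_sq_le _ M)
    _ ≤ M ^ 2 * (2 / Z) := by
        gcongr; exact (Nat.lt_floor_add_one Z).le
    _ = 2 * M ^ 2 / Z := by ring

lemma sq_div_twelve_le_card_filter_coprime (M : ℕ) :
    (M : ℝ) ^ 2 / 12 ≤ #{w ∈ Ioc 0 M ×ˢ Ioc 0 M | Nat.Coprime w.1 w.2} := by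
  have hsplit := card_filter_add_card_filter_not (s := Ioc 0 M ×ˢ Ioc 0 M)
    (p := fun w => Nat.Coprime w.1 w.2)
  have hnot : {w ∈ Ioc 0 M ×ˢ Ioc 0 M | ¬Nat.Coprime w.1 w.2} =
      {w ∈ Ioc 0 M ×ˢ Ioc 0 M | 1 < Nat.gcd w.1 w.2} := by
    refine filter_congr fun w hw => ?_
    simp only [mem_product, mem_Ioc] at hw
    have : 0 < Nat.gcd w.1 w.2 := Nat.gcd_pos_of_pos_left _ (by omega)
    rw [Nat.Coprime]; omega
  have htail : ∑ g ∈ Ioc 1 M, ((g : ℝ) ^ 2)⁻¹ ≤ 1 / 4 + 2 / 3 := by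
    calc _ ≤ ∑ g ∈ insert 2 (Ioc 2 M), ((g : ℝ) ^ 2)⁻¹ :=
          sum_le_sum_of_subset_of_nonneg
            (fun g hg => by simp only [mem_Ioc, mem_insert] at hg ⊢; omega)
            fun _ _ _ => by positivity
      _ ≤ 1 / 4 + 2 / 3 := by
          rw [sum_insert (by simp)]
          have := sum_Ioc_inv_sq_le 2 M
          norm_num at this ⊢; linarith
  have hbad := card_filter_lt_gcd_le_sum M 1
  rw [← hnot] at hbad
  have htotal : (#(Ioc 0 M ×ˢ Ioc 0 M) : ℝ) = M ^ 2 := by simp [sq]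
  rw [← hsplit, Nat.cast_add] at htotal
  nlinarith [sq_nonneg (M : ℝ)]

lemma Rat.num_den_injective : Function.Injective fun q : ℚ => (q.num, q.den) :=
  fun _ _ h => Rat.ext (congrArg Prod.fst h) (congrArg Prod.snd h)

noncomputable def boundedHeight (M : ℕ) : Finset ℚ :=
  (Icc (-M : ℤ) M ×ˢ Ioc 0 M).preimage _ Rat.num_den_injective.injOn

lemma mem_boundedHeight {M : ℕ} {q : ℚ} :
    q ∈ boundedHeight M ↔ |q.num| ≤ M ∧ q.den ≤ M := by
  rw [boundedHeight, Finset.mem_preimage]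
  simp [abs_le, q.den_pos]

lemma mem_boundedHeight_floor {X : ℝ} (hX : 0 ≤ X) {q : ℚ} :
    q ∈ boundedHeight ⌊X⌋₊ ↔ (|q.num| : ℝ) ≤ X ∧ (q.den : ℝ) ≤ X := by
  rw [mem_boundedHeight, Nat.le_floor_iff hX, ← Int.cast_abs, Int.abs_eq_natAbs]
  simp only [Int.cast_natCast, Nat.cast_le, Nat.le_floor_iff hX]

lemma card_filter_den_le (M : ℕ) (p : ℕ → Prop) [DecidablePred p] :
    #{q ∈ boundedHeight M | p q.den} ≤ (2 * M + 1) * #{n ∈ Ioc 0 M | p n} := by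
  calc _ ≤ #(Icc (-M : ℤ) M ×ˢ {n ∈ Ioc 0 M | p n}) := by
        refine card_le_card_of_injOn _ (fun q hq => ?_) Rat.num_den_injective.injOn
        simp only [coe_filter, Set.mem_ofPred_eq, mem_boundedHeight] at hq
        simp [abs_le.1 hq.1.1, hq.1.2, hq.2, q.den_pos]
    _ = _ := by simp [card_product]; omega

lemma card_filter_den_pair_le (M : ℕ) (p : ℕ → ℕ → Prop) [DecidableRel p] :
    #{v ∈ boundedHeight M ×ˢ boundedHeight M | p v.1.den v.2.den} ≤
      (2 * M + 1) ^ 2 * #{w ∈ Ioc 0 M ×ˢ Ioc 0 M | p w.1 w.2} := by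
  calc _ ≤ #((Icc (-M : ℤ) M ×ˢ Icc (-M : ℤ) M) ×ˢ {w ∈ Ioc 0 M ×ˢ Ioc 0 M | p w.1 w.2}) := by
        refine card_le_card_of_injOn (fun v => ((v.1.num, v.2.num), (v.1.den, v.2.den)))
          (fun v hv => ?_) fun v _ w _ h => ?_
        · simp only [coe_filter, Set.mem_ofPred_eq, mem_product, mem_boundedHeight] at hv
          simp [abs_le.1 hv.1.1.1, abs_le.1 hv.1.2.1, hv.1.1.2, hv.1.2.2, hv.2, Rat.den_pos]
        · simp only [Prod.mk.injEq] at h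
          exact Prod.ext (Rat.ext h.1.1 h.2.1) (Rat.ext h.1.2 h.2.2)
    _ = _ := by
        have hI : #(Icc (-M : ℤ) M) = 2 * M + 1 := by simp; omega
        rw [card_product, card_product, hI]; ring

lemma card_filter_coprime_le_card_boundedHeight (M : ℕ) :
    #{w ∈ Ioc 0 M ×ˢ Ioc 0 M | Nat.Coprime w.1 w.2} ≤ #(boundedHeight M) := by
  refine card_le_card_of_surjOn (fun q => (q.num.toNat, q.den)) fun w hw => ?_
  simp only [coe_filter, Set.mem_ofPred_eq, mem_product, mem_Ioc] at hw
  refine ⟨⟨w.1, w.2, by omega, by simpa using hw.2⟩, ?_, by simp⟩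
  simp [mem_boundedHeight, hw.1.1.2, hw.1.2.2]

lemma sq_le_card_boundedHeight {X : ℝ} (hX : 2 ≤ X) :
    X ^ 2 ≤ 48 * #(boundedHeight ⌊X⌋₊) := by
  have hM : X - 1 < ⌊X⌋₊ := Nat.sub_one_lt_floor X
  have : (⌊X⌋₊ : ℝ) ^ 2 / 12 ≤ #(boundedHeight ⌊X⌋₊) :=
    (sq_div_twelve_le_card_filter_coprime ⌊X⌋₊).trans
      (by exact_mod_cast card_filter_coprime_le_card_boundedHeight ⌊X⌋₊)
  nlinarith

lemma card_filter_rad_den_lt_le {X t : ℝ} (hX : 2 ≤ X) (ht : 0 < t) :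
    (#{q ∈ boundedHeight ⌊X⌋₊ | (rad q.den : ℝ) < X / t ^ 2} : ℝ) ≤
      432 / t * #(boundedHeight ⌊X⌋₊) := by
  have hM : (⌊X⌋₊ : ℝ) ≤ X := Nat.floor_le (by linarith)
  have hrad : (#{n ∈ Ioc 0 ⌊X⌋₊ | (rad n : ℝ) < X / t ^ 2} : ℝ) ≤ 3 * X / t := by
    calc _ ≤ X / t ^ 2 * t + 2 * ⌊X⌋₊ / t := card_filter_rad_lt_le ⌊X⌋₊ (by positivity) ht
      _ = (X + 2 * ⌊X⌋₊) / t := by field_simp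
      _ ≤ 3 * X / t := by gcongr; linarith
  calc _ ≤ (2 * ⌊X⌋₊ + 1 : ℝ) * #{n ∈ Ioc 0 ⌊X⌋₊ | (rad n : ℝ) < X / t ^ 2} := by
        have := card_filter_den_le ⌊X⌋₊ fun n => (rad n : ℝ) < X / t ^ 2
        exact_mod_cast this
    _ ≤ 3 * X * (3 * X / t) := by gcongr; linarith
    _ = 9 * X ^ 2 / t := by ring
    _ ≤ 9 * (48 * #(boundedHeight ⌊X⌋₊)) / t := by gcongr; exact sq_le_card_boundedHeight hX
    _ = 432 / t * #(boundedHeight ⌊X⌋₊) := by ring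

lemma card_filter_lt_gcd_den_le {X t : ℝ} (hX : 2 ≤ X) (ht : 1 ≤ t) :
    (#{v ∈ boundedHeight ⌊X⌋₊ ×ˢ boundedHeight ⌊X⌋₊ |
        t ^ 2 < (Nat.gcd v.1.den v.2.den : ℝ)} : ℝ) ≤
      41472 / t * #(boundedHeight ⌊X⌋₊) ^ 2 := by
  have hM : (⌊X⌋₊ : ℝ) ≤ X := Nat.floor_le (by linarith)
  have hgcd : (#{w ∈ Ioc 0 ⌊X⌋₊ ×ˢ Ioc 0 ⌊X⌋₊ | t ^ 2 < (Nat.gcd w.1 w.2 : ℝ)} : ℝ) ≤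
      2 * X ^ 2 / t := by
    calc _ ≤ 2 * ⌊X⌋₊ ^ 2 / t ^ 2 := card_filter_lt_gcd_le _ (by positivity)
      _ ≤ 2 * X ^ 2 / t := by gcongr; nlinarith
  calc _ ≤ (2 * ⌊X⌋₊ + 1 : ℝ) ^ 2 *
        #{w ∈ Ioc 0 ⌊X⌋₊ ×ˢ Ioc 0 ⌊X⌋₊ | t ^ 2 < (Nat.gcd w.1 w.2 : ℝ)} := by
        have := card_filter_den_pair_le ⌊X⌋₊ fun m n => t ^ 2 < (Nat.gcd m n : ℝ)
        exact_mod_cast this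
    _ ≤ (3 * X) ^ 2 * (2 * X ^ 2 / t) := by gcongr; linarith
    _ = 18 * (X ^ 2) ^ 2 / t := by ring
    _ ≤ 18 * (48 * #(boundedHeight ⌊X⌋₊)) ^ 2 / t := by
        gcongr; exact sq_le_card_boundedHeight hX
    _ = 41472 / t * #(boundedHeight ⌊X⌋₊) ^ 2 := by ring

section Coordinates

open Fintype

variable {ι α : Type*} [Fintype ι] [DecidableEq ι] [DecidableEq α] (S : Finset α)

lemma card_filter_piFinset_apply (p : α → Prop) [DecidablePred p] (k : ι) :
    #{f ∈ piFinset fun _ : ι => S | p (f k)} = #{x ∈ S | p x} * #S ^ (card ι - 1) := by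
  rw [card_eq_sum_card_fiberwise (f := fun f => f k) (t := {x ∈ S | p x})
    (fun f hf => by simp_all [mem_piFinset]), ← smul_eq_mul, ← sum_const]
  refine sum_congr rfl fun x hx => ?_
  rw [mem_filter] at hx
  rw [filter_filter, ← card_filter_piFinset_const_eq_of_mem S k hx.1]
  exact congrArg card (filter_congr fun f _ => ⟨And.right, fun h => ⟨h ▸ hx.2, h⟩⟩)

lemma card_filter_piFinset_apply_eq_apply_eq {k k' : ι} (hk : k ≠ k') {a b : α} (ha : a ∈ S)
    (hb : b ∈ S) :
    #{f ∈ piFinset fun _ : ι => S | f k = a ∧ f k' = b} = #S ^ (card ι - 2) := by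
  rw [← filter_filter, ← piFinset_update_singleton_eq_filter_piFinset_eq (fun _ : ι => S) k ha,
    card_filter_piFinset_eq_of_mem (Function.update (fun _ : ι => S) k {a}) k'
      (by simpa [Function.update_of_ne hk.symm]),
    ← prod_erase_mul _ _ (mem_erase.2 ⟨hk, mem_univ _⟩), Function.update_self, card_singleton,
    mul_one, Finset.prod_congr rfl fun j hj => by rw [Function.update_of_ne (ne_of_mem_erase hj)],
    prod_const, card_erase_of_mem (mem_erase.2 ⟨hk, mem_univ _⟩), card_erase_of_mem (mem_univ _),
    card_univ]
  rfl

lemma card_filter_piFinset_apply_apply (p : α → α → Prop) [DecidableRel p] {k k' : ι}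
    (hk : k ≠ k') :
    #{f ∈ piFinset fun _ : ι => S | p (f k) (f k')} =
      #{v ∈ S ×ˢ S | p v.1 v.2} * #S ^ (card ι - 2) := by
  rw [card_eq_sum_card_fiberwise (f := fun f => (f k, f k')) (t := {v ∈ S ×ˢ S | p v.1 v.2})
    (fun f hf => by simp_all [mem_piFinset]), ← smul_eq_mul, ← sum_const]
  refine sum_congr rfl fun v hv => ?_
  simp only [mem_filter, mem_product] at hv
  rw [filter_filter, ← card_filter_piFinset_apply_eq_apply_eq S hk hv.1.1 hv.1.2]
  refine congrArg card (filter_congr fun f _ => ?_)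
  rw [Prod.ext_iff]
  exact ⟨And.right, fun h => ⟨h.1 ▸ h.2 ▸ hv.2, h⟩⟩

theorem card_filter_piFinset_not_forall_le (G : α → Prop) (H : α → α → Prop) [DecidablePred G]
    [DecidableRel H] {δ₁ δ₂ : ℝ} (hG : (#{x ∈ S | ¬G x} : ℝ) ≤ δ₁ * #S)
    (hH : (#{v ∈ S ×ˢ S | ¬H v.1 v.2} : ℝ) ≤ δ₂ * #S ^ 2) :
    (#{f ∈ piFinset fun _ : ι => S |
        ¬((∀ k, G (f k)) ∧ ∀ k k', k ≠ k' → H (f k) (f k'))} : ℝ) ≤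
      (card ι * δ₁ + (card ι * (card ι - 1) : ℕ) * δ₂) * #S ^ card ι := by
  set P := piFinset fun _ : ι => S
  have hsingle : ∀ k, (#{f ∈ P | ¬G (f k)} : ℝ) ≤ δ₁ * #S ^ card ι := by
    intro k
    have hι : 1 ≤ card ι := card_pos_iff.2 ⟨k⟩
    calc (#{f ∈ P | ¬G (f k)} : ℝ) = #{x ∈ S | ¬G x} * #S ^ (card ι - 1) := by
          exact_mod_cast card_filter_piFinset_apply S (fun x => ¬G x) k
      _ ≤ δ₁ * #S * #S ^ (card ι - 1) := by gcongr
      _ = δ₁ * #S ^ card ι := by rw [mul_assoc, ← pow_succ', Nat.sub_add_cancel hι]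
  have hpair : ∀ kk ∈ (univ : Finset ι).offDiag, (#{f ∈ P | ¬H (f kk.1) (f kk.2)} : ℝ) ≤
      δ₂ * #S ^ card ι := by
    rintro ⟨k, k'⟩ hkk
    have hk : k ≠ k' := (mem_offDiag.1 hkk).2.2
    have hι : 2 ≤ card ι := one_lt_card_iff.2 ⟨k, k', hk⟩
    calc (#{f ∈ P | ¬H (f k) (f k')} : ℝ) = #{v ∈ S ×ˢ S | ¬H v.1 v.2} * #S ^ (card ι - 2) := by
          exact_mod_cast card_filter_piFinset_apply_apply S (fun x y => ¬H x y) hk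
      _ ≤ δ₂ * #S ^ 2 * #S ^ (card ι - 2) := by gcongr
      _ = δ₂ * #S ^ card ι := by rw [mul_assoc, ← pow_add, Nat.add_sub_cancel' hι]
  have hsub : {f ∈ P | ¬((∀ k, G (f k)) ∧ ∀ k k', k ≠ k' → H (f k) (f k'))} ⊆
      (univ.biUnion fun k => {f ∈ P | ¬G (f k)}) ∪
        (univ.offDiag.biUnion fun kk : ι × ι => {f ∈ P | ¬H (f kk.1) (f kk.2)}) := by
    intro f hf
    simp only [mem_filter, not_and_or, not_forall] at hf
    rcases hf with ⟨hfP, ⟨k, hk⟩ | ⟨k, k', hkk, hH⟩⟩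
    · exact mem_union_left _ (mem_biUnion.2 ⟨k, mem_univ _, mem_filter.2 ⟨hfP, hk⟩⟩)
    · exact mem_union_right _ (mem_biUnion.2 ⟨(k, k'), by simpa using hkk, mem_filter.2 ⟨hfP, hH⟩⟩)
  calc _ ≤ ((∑ k, #{f ∈ P | ¬G (f k)} +
        ∑ kk ∈ univ.offDiag, #{f ∈ P | ¬H (f kk.1) (f kk.2)} : ℕ) : ℝ) :=
        mod_cast (card_le_card hsub).trans ((card_union_le _ _).trans
          (add_le_add card_biUnion_le card_biUnion_le))
    _ ≤ card ι • (δ₁ * #S ^ card ι) + #(univ : Finset ι).offDiag • (δ₂ * #S ^ card ι) := by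
        push_cast
        exact add_le_add (sum_le_card_nsmul _ _ _ fun k _ => hsingle k)
          (sum_le_card_nsmul _ _ _ hpair)
    _ = _ := by
        rw [offDiag_card, card_univ, nsmul_eq_mul, nsmul_eq_mul, Nat.mul_sub_one]; ring

end Coordinates

section SumIndex

variable {ι₁ ι₂ α : Type*} [Fintype ι₁] [Fintype ι₂] [DecidableEq ι₁] [DecidableEq ι₂]
  (S : Finset α)

lemma ncard_setOf_forall_mem_and (Q : (ι₁ → α) × (ι₂ → α) → Prop) [DecidablePred Q] :
    {p : (ι₁ → α) × (ι₂ → α) | ((∀ i, p.1 i ∈ S) ∧ ∀ j, p.2 j ∈ S) ∧ Q p}.ncard =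
      #{f ∈ Fintype.piFinset fun _ => S | Q (f ∘ Sum.inl, f ∘ Sum.inr)} := by
  set e := Equiv.sumArrowEquivProdArrow ι₁ ι₂ α
  rw [← Set.ncard_coe_finset, ← Set.ncard_image_of_injective _ e.injective,
    e.image_eq_preimage_symm]
  congr 1
  ext p
  simp only [Set.mem_preimage, coe_filter, Set.mem_ofPred_eq, Fintype.mem_piFinset, Sum.forall]
  rfl

lemma ncard_setOf_forall_mem :
    {p : (ι₁ → α) × (ι₂ → α) | (∀ i, p.1 i ∈ S) ∧ ∀ j, p.2 j ∈ S}.ncard =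
      #S ^ (Fintype.card ι₁ + Fintype.card ι₂) := by
  simpa using ncard_setOf_forall_mem_and (ι₁ := ι₁) (ι₂ := ι₂) S fun _ => True

end SumIndex

theorem stmt19_general (d : ℕ) (ε : ℝ) (hε : 0 < ε) :
    ∃ C > (0 : ℝ), ∀ X : ℝ, 2 ≤ X →
      (({p : (Fin (d - 1) → ℚ) × (Fin d → ℚ) |
          ((∀ i, (|(p.1 i).num| : ℝ) ≤ X ∧ ((p.1 i).den : ℝ) ≤ X) ∧
           (∀ j, (|(p.2 j).num| : ℝ) ≤ X ∧ ((p.2 j).den : ℝ) ≤ X)) ∧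
          ¬ ((∀ k : Fin (d - 1) ⊕ Fin d,
                X ^ (1 - 2 * ε) ≤ (rad (Sum.elim p.1 p.2 k).den : ℝ)) ∧
             (∀ k k' : Fin (d - 1) ⊕ Fin d, k ≠ k' →
                ((Nat.gcd (Sum.elim p.1 p.2 k).den (Sum.elim p.1 p.2 k').den : ℕ) : ℝ)
                  ≤ X ^ (2 * ε)))}).ncard : ℝ) ≤
        C * (d : ℝ) ^ 2 * X ^ (-ε) *
          (({p : (Fin (d - 1) → ℚ) × (Fin d → ℚ) |
              (∀ i, (|(p.1 i).num| : ℝ) ≤ X ∧ ((p.1 i).den : ℝ) ≤ X) ∧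
              (∀ j, (|(p.2 j).num| : ℝ) ≤ X ∧ ((p.2 j).den : ℝ) ≤ X)}).ncard : ℝ) := by
  classical
  refine ⟨2 * 432 + 4 * 41472, by norm_num, fun X hX => ?_⟩
  have hX0 : 0 ≤ X := by linarith
  set t := X ^ ε
  have ht : 1 ≤ t := Real.one_le_rpow (by linarith) hε.le
  have hy : X ^ (1 - 2 * ε) = X / t ^ 2 := by
    rw [Real.rpow_sub (by linarith), Real.rpow_one, mul_comm, Real.rpow_mul hX0, Real.rpow_two]
  have hZ : X ^ (2 * ε) = t ^ 2 := by rw [mul_comm, Real.rpow_mul hX0, Real.rpow_two]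
  have hinv : X ^ (-ε) = t⁻¹ := Real.rpow_neg hX0 ε
  simp only [← mem_boundedHeight_floor hX0]
  rw [hy, hZ, hinv, ncard_setOf_forall_mem, ncard_setOf_forall_mem_and]
  simp only [Sum.elim_comp_inl_inr]
  have key := card_filter_piFinset_not_forall_le (ι := Fin (d - 1) ⊕ Fin d) (boundedHeight ⌊X⌋₊)
    (fun q => X / t ^ 2 ≤ (rad q.den : ℝ)) (fun q q' => ((Nat.gcd q.den q'.den : ℕ) : ℝ) ≤ t ^ 2)
    (by simpa only [not_le] using card_filter_rad_den_lt_le hX (by positivity : 0 < t))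
    (by simpa only [not_le] using card_filter_lt_gcd_den_le hX ht)
  refine key.trans ?_
  simp only [Fintype.card_sum, Fintype.card_fin, Nat.cast_pow]
  have hm : ((d - 1 + d : ℕ) : ℝ) ≤ 2 * d := by norm_cast; omega
  have hpairs : (((d - 1 + d) * (d - 1 + d - 1) : ℕ) : ℝ) ≤ 4 * d ^ 2 := by
    have : (d - 1 + d) * (d - 1 + d - 1) ≤ (2 * d) * (2 * d) := Nat.mul_le_mul (by omega) (by omega)
    norm_cast; linarith
  have hd : (d : ℝ) ≤ d ^ 2 := by norm_cast; exact Nat.le_self_pow two_ne_zero d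
  calc _ ≤ (2 * d * (432 / t) + 4 * d ^ 2 * (41472 / t)) *
        (#(boundedHeight ⌊X⌋₊) : ℝ) ^ (d - 1 + d) := by gcongr
    _ ≤ (2 * d ^ 2 * (432 / t) + 4 * d ^ 2 * (41472 / t)) *
        (#(boundedHeight ⌊X⌋₊) : ℝ) ^ (d - 1 + d) := by gcongr
    _ = _ := by ring

/-- the proportion of pairs of coefficient tuples (of a monic
centered polynomial and a monic polynomial, all coefficients of height ≤ log X)
that fail to be ε-ordinary is `O_ε(d² X^{-ε})`, stated as a counting bound. -/
theorem stmt19 (d : ℕ) (hd : 1 ≤ d) (ε : ℝ) (hε : 0 < ε) :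
    ∃ C > (0 : ℝ), ∀ X : ℝ, 2 ≤ X →
      (({p : (Fin (d - 1) → ℚ) × (Fin d → ℚ) |
          ((∀ i, (|(p.1 i).num| : ℝ) ≤ X ∧ ((p.1 i).den : ℝ) ≤ X) ∧
           (∀ j, (|(p.2 j).num| : ℝ) ≤ X ∧ ((p.2 j).den : ℝ) ≤ X)) ∧
          ¬ ((∀ k : Fin (d - 1) ⊕ Fin d,
                X ^ (1 - 2 * ε) ≤ (rad (Sum.elim p.1 p.2 k).den : ℝ)) ∧
             (∀ k k' : Fin (d - 1) ⊕ Fin d, k ≠ k' →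
                ((Nat.gcd (Sum.elim p.1 p.2 k).den (Sum.elim p.1 p.2 k').den : ℕ) : ℝ)
                  ≤ X ^ (2 * ε)))}).ncard : ℝ) ≤
        C * (d : ℝ) ^ 2 * X ^ (-ε) *
          (({p : (Fin (d - 1) → ℚ) × (Fin d → ℚ) |
              (∀ i, (|(p.1 i).num| : ℝ) ≤ X ∧ ((p.1 i).den : ℝ) ≤ X) ∧
              (∀ j, (|(p.2 j).num| : ℝ) ≤ X ∧ ((p.2 j).den : ℝ) ≤ X)}).ncard : ℝ) :=
  stmt19_general d ε hε
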